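/- For every integer n ≥ 3, f_{2n+1}(n, n−1) = (8n² + 9n + 2)/(16n² + 8n). (This is the case m = 2, α = 0 of the closed form for values two steps below the top diagonal.) -/

import Mathlib

/-- Auxiliary backward-induction for the truncated Chow–Robbins value.
The first argument is the remaining number of tosses `N - (h + t)`. -/
def crAux : ℕ → ℕ → ℕ → ℕ → ℚ
  | 0, N, h, _t => max (1/2) ((h : ℚ) / (N : ℚ))
  | k+1, N, h, t =>
      max ((crAux k N (h+1) t + crAux k N h (t+1)) / 2) ((h : ℚ) / ((h : ℚ) + (t : ℚ)))

/-- `cr N h t` is the truncated Chow–Robbins value `f_N(h,t)`: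
the optimal expected reward of the coin-tossing game truncated at `N` tosses,
starting with `h` heads and `t` tails. -/
def cr (N h t : ℕ) : ℚ := crAux (N - (h + t)) N h t

/-!
Two steps below the top diagonal `h + t = N = 2n + 1` everything is explicit. On the top
diagonal the value is `1/2` below the middle and `h/N` above it. One step below, a player
strictly ahead stops, since the average of the two top values `(2h+1)/(2N)` is at most `h/(N-1)`,
while at the tie `(n, n)` the player continues and gets `(4n+3)/(8n+4)`. At `(n, n-1)` continuing
is worth the claimed value, and it beats stopping at `n/(2n-1)` exactly when `2n² ≥ 5n + 2`,
i.e. for `n ≥ 3`.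
-/

section ChowRobbins

variable {N h t : ℕ}

theorem cr_of_add_eq (hN : h + t = N) : cr N h t = max (1/2) ((h : ℚ) / N) := by
  rw [cr, hN, Nat.sub_self, crAux]

theorem cr_of_add_lt (hN : h + t < N) :
    cr N h t = max ((cr N (h+1) t + cr N h (t+1)) / 2) ((h : ℚ) / (h + t)) := by
  obtain ⟨k, hk⟩ : ∃ k, N - (h + t) = k + 1 := ⟨N - (h + t) - 1, by omega⟩
  have hk₁ : N - (h + 1 + t) = k := by omega
  have hk₂ : N - (h + (t + 1)) = k := by omega
  rw [cr, hk, crAux, cr, cr, hk₁, hk₂]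

theorem cr_of_add_eq_of_two_mul_le (hN : h + t = N) (hh : 2 * h ≤ N) : cr N h t = 1/2 := by
  rw [cr_of_add_eq hN, max_eq_left]
  rcases N.eq_zero_or_pos with rfl | hN₀
  · simp
  · have : (2 * h : ℚ) ≤ N := by exact_mod_cast hh
    rw [div_le_iff₀ (by positivity)]
    linarith

theorem cr_of_add_eq_of_le_two_mul (hN : h + t = N) (hN₀ : 0 < N) (hh : N ≤ 2 * h) :
    cr N h t = h / N := by
  rw [cr_of_add_eq hN, max_eq_right]
  have : (N : ℚ) ≤ 2 * h := by exact_mod_cast hh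
  rw [le_div_iff₀ (by positivity)]
  linarith

theorem cr_of_add_add_one_eq_of_lt (hN : h + t + 1 = N) (hth : t < h) :
    cr N h t = h / (h + t) := by
  rw [cr_of_add_lt (by omega), cr_of_add_eq_of_le_two_mul (by omega) (by omega) (by omega),
    cr_of_add_eq_of_le_two_mul (by omega) (by omega) (by omega), max_eq_right]
  have hh : (0 : ℚ) < h := by exact_mod_cast t.zero_le.trans_lt hth
  have hN' : (N : ℚ) = h + t + 1 := by rw [← hN]; push_cast; ring
  have ht : (t : ℚ) + 1 ≤ h := by exact_mod_cast hth
  rw [hN', ← add_div, div_div, div_le_div_iff₀ (by positivity) (by positivity)]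
  push_cast
  nlinarith

end ChowRobbins

theorem cr_two_mul_add_one_self (n : ℕ) :
    cr (2 * n + 1) n n = (4 * n + 3) / (8 * n + 4) := by
  rw [cr_of_add_lt (by omega), cr_of_add_eq_of_le_two_mul (by omega) (by omega) (by omega),
    cr_of_add_eq_of_two_mul_le (by omega) (by omega), max_eq_left]
  · push_cast
    field_simp
    ring
  · rcases n.eq_zero_or_pos with rfl | hn
    · norm_num
    · push_cast
      rw [div_le_iff₀ (by positivity)]
      field_simp
      nlinarith

theorem cr_m2_a0 (n : ℕ) (hn : 3 ≤ n) :
    cr (2 * n + 1) n (n - 1) =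
      (8 * (n : ℚ)^2 + 9 * (n : ℚ) + 2) / (16 * (n : ℚ)^2 + 8 * (n : ℚ)) := by
  have hcast : ((n - 1 : ℕ) : ℚ) = n - 1 := by rw [Nat.cast_sub (by omega), Nat.cast_one]
  have hq : (3 : ℚ) ≤ n := by exact_mod_cast hn
  have hahead : cr (2 * n + 1) (n + 1) (n - 1) = (n + 1) / (2 * n) := by
    rw [cr_of_add_add_one_eq_of_lt (by omega) (by omega), hcast]
    push_cast
    ring
  have hcontinue : (cr (2 * n + 1) (n + 1) (n - 1) + cr (2 * n + 1) n n) / 2 =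
      (8 * (n : ℚ)^2 + 9 * n + 2) / (16 * n^2 + 8 * n) := by
    rw [hahead, cr_two_mul_add_one_self]
    field_simp
    ring
  rw [cr_of_add_lt (by omega), Nat.sub_add_cancel (by omega), hcontinue, max_eq_left]
  rw [hcast, div_le_div_iff₀ (by linarith) (by positivity)]
  nlinarith
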